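/- arXiv:2111.05685 — 2 statements merged into one kernel-verified Lean document; each statement's English description precedes it below -/
import Mathlib

section
/- Let s ∈ (0,1)^n, let m, m' be independent random vectors with independent coordinates m_j ~ Bernoulli(s_j), let L : {0,1}^n → ℝ, and suppose that for every coordinate j and every fixed value b ∈ {0,1}, E[(L(m) - L(m'))^2 | m_j = b] ≤ V for some constant V ≥ 0. Then for α ∈ [1/2, 1), the second moment of the preconditioned estimator satisfies E[ Σ_j (s_j(1-s_j))^{2α} (L(m)-L(m'))^2 (m_j - s_j)^2/(s_j(1-s_j))^2 ] ≤ n·V. -/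
/-- Probability mass of a Bernoulli(s) outcome `b : Bool`. -/
def bernPr (s : ℝ) (b : Bool) : ℝ := if b then s else 1 - s

/-- Value in `ℝ` of a boolean outcome. -/
def bval (b : Bool) : ℝ := if b then 1 else 0

/-- Probability of a mask `m ∈ {0,1}^n` under independent Bernoulli(s_j) coordinates. -/
def maskPr {n : ℕ} (s : Fin n → ℝ) (m : Fin n → Bool) : ℝ := ∏ j, bernPr (s j) (m j)

lemma vrpge_coord_bound {n : ℕ} (s : Fin n → ℝ)
    (hs : ∀ j, s j ∈ Set.Ioo (0:ℝ) 1) (L : (Fin n → Bool) → ℝ) (V : ℝ) (hV : 0 ≤ V)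
    (α : ℝ) (hα : α ∈ Set.Ico (1/2 : ℝ) 1) (j : Fin n)
    (hcond : ∀ (b : Bool),
      (∑ m : Fin n → Bool, ∑ m' : Fin n → Bool,
        if m j = b then
          (∏ i ∈ Finset.univ.erase j, bernPr (s i) (m i)) * maskPr s m' * (L m - L m') ^ 2
        else 0) ≤ V) :
    (∑ m : Fin n → Bool, ∑ m' : Fin n → Bool,
      maskPr s m * maskPr s m' *
        ((s j * (1 - s j)) ^ (2 * α) * (L m - L m') ^ 2 *
          (bval (m j) - s j) ^ 2 / (s j * (1 - s j)) ^ 2)) ≤ V := by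
  obtain ⟨hs0, hs1⟩ := hs j
  set X := s j * (1 - s j) with hXdef
  have hX : 0 < X := mul_pos hs0 (by linarith)
  have hX1 : X ≤ 1 := by nlinarith
  set coef : Bool → ℝ := fun b => bernPr (s j) b * (bval b - s j) ^ 2 * (X ^ (2 * α) / X ^ 2)
    with hcoef
  have hcoefnn : ∀ b, 0 ≤ coef b := by
    intro b
    have h1 : 0 ≤ bernPr (s j) b := by cases b <;> simp [bernPr] <;> linarith
    have h2 : 0 ≤ X ^ (2 * α) / X ^ 2 := by positivity
    positivity
  have key : ∀ (m m' : Fin n → Bool),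
      maskPr s m * maskPr s m' *
        (X ^ (2 * α) * (L m - L m') ^ 2 * (bval (m j) - s j) ^ 2 / X ^ 2)
      = coef true * (if m j = true then
            (∏ i ∈ Finset.univ.erase j, bernPr (s i) (m i)) * maskPr s m' * (L m - L m') ^ 2
          else 0)
        + coef false * (if m j = false then
            (∏ i ∈ Finset.univ.erase j, bernPr (s i) (m i)) * maskPr s m' * (L m - L m') ^ 2
          else 0) := by
    intro m m'
    have hmask : maskPr s m
        = bernPr (s j) (m j) * ∏ i ∈ Finset.univ.erase j, bernPr (s i) (m i) :=
      (Finset.mul_prod_erase Finset.univ _ (Finset.mem_univ j)).symm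
    cases hb : m j <;> simp only [hcoef, hmask, hb, if_true, if_false, Bool.false_eq_true,
      Bool.true_eq_false, mul_zero, add_zero, zero_add] <;> ring
  calc (∑ m : Fin n → Bool, ∑ m' : Fin n → Bool,
      maskPr s m * maskPr s m' *
        (X ^ (2 * α) * (L m - L m') ^ 2 * (bval (m j) - s j) ^ 2 / X ^ 2))
      = coef true * (∑ m : Fin n → Bool, ∑ m' : Fin n → Bool,
          if m j = true then
            (∏ i ∈ Finset.univ.erase j, bernPr (s i) (m i)) * maskPr s m' * (L m - L m') ^ 2
          else 0)
        + coef false * (∑ m : Fin n → Bool, ∑ m' : Fin n → Bool,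
          if m j = false then
            (∏ i ∈ Finset.univ.erase j, bernPr (s i) (m i)) * maskPr s m' * (L m - L m') ^ 2
          else 0) := by
        simp_rw [key, Finset.sum_add_distrib, Finset.mul_sum]
    _ ≤ coef true * V + coef false * V := by
        exact add_le_add (mul_le_mul_of_nonneg_left (hcond true) (hcoefnn true))
          (mul_le_mul_of_nonneg_left (hcond false) (hcoefnn false))
    _ = (coef true + coef false) * V := by ring
    _ ≤ 1 * V := by
        apply mul_le_mul_of_nonneg_right _ hV
        have hsum : coef true + coef false = X * (X ^ (2 * α) / X ^ 2) := by
          simp [hcoef, bernPr, bval]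
          ring
        rw [hsum]
        have hrp : X ^ (2 * α) ≤ X := by
          have := Real.rpow_le_rpow_of_exponent_ge hX hX1 (by linarith [hα.1] : (1:ℝ) ≤ 2 * α)
          simpa using this
        rw [mul_div_assoc'] at *
        rw [div_le_one (by positivity : (0:ℝ) < X ^ 2)]
        nlinarith
    _ = V := one_mul V

/-- Variance bound for the preconditioned VR-PGE estimator (Theorem 1).
If for every coordinate `j` and every fixed value `b ∈ {0,1}` the conditional
second moment `E[(L(m)-L(m'))² | m_j = b] ≤ V`, then for `α ∈ [1/2,1)`,
`E[Σ_j (s_j(1-s_j))^(2α) (L(m)-L(m'))² (m_j-s_j)²/(s_j(1-s_j))²] ≤ n·V`. -/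
theorem vrpge_second_moment_bound {n : ℕ} (s : Fin n → ℝ)
    (hs : ∀ j, s j ∈ Set.Ioo (0:ℝ) 1) (L : (Fin n → Bool) → ℝ) (V : ℝ) (hV : 0 ≤ V)
    (α : ℝ) (hα : α ∈ Set.Ico (1/2 : ℝ) 1)
    (hcond : ∀ (j : Fin n) (b : Bool),
      (∑ m : Fin n → Bool, ∑ m' : Fin n → Bool,
        if m j = b then
          (∏ i ∈ Finset.univ.erase j, bernPr (s i) (m i)) * maskPr s m' * (L m - L m') ^ 2
        else 0) ≤ V) :
    (∑ m : Fin n → Bool, ∑ m' : Fin n → Bool,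
      maskPr s m * maskPr s m' *
        ∑ j, (s j * (1 - s j)) ^ (2 * α) * (L m - L m') ^ 2 *
          (bval (m j) - s j) ^ 2 / (s j * (1 - s j)) ^ 2) ≤ n * V := by
  have hswap :
      (∑ m : Fin n → Bool, ∑ m' : Fin n → Bool,
        maskPr s m * maskPr s m' *
          ∑ j, (s j * (1 - s j)) ^ (2 * α) * (L m - L m') ^ 2 *
            (bval (m j) - s j) ^ 2 / (s j * (1 - s j)) ^ 2)
      = ∑ j, ∑ m : Fin n → Bool, ∑ m' : Fin n → Bool,
          maskPr s m * maskPr s m' *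
            ((s j * (1 - s j)) ^ (2 * α) * (L m - L m') ^ 2 *
              (bval (m j) - s j) ^ 2 / (s j * (1 - s j)) ^ 2) := by
    simp_rw [Finset.mul_sum]
    rw [Finset.sum_congr rfl fun m _ => (Finset.sum_comm (γ := Fin n → Bool))]
    exact Finset.sum_comm
  rw [hswap]
  calc (∑ j, ∑ m : Fin n → Bool, ∑ m' : Fin n → Bool,
          maskPr s m * maskPr s m' *
            ((s j * (1 - s j)) ^ (2 * α) * (L m - L m') ^ 2 *
              (bval (m j) - s j) ^ 2 / (s j * (1 - s j)) ^ 2))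
      ≤ ∑ _j : Fin n, V := by
        apply Finset.sum_le_sum
        intro j _
        exact vrpge_coord_bound s hs L V hV α hα j (hcond j)
    _ = n * V := by simp [Finset.sum_const, nsmul_eq_mul]
end

section
/- Let L : {0,1} → ℝ with L(0), L(1) > 0 and s ∈ (0,1). As s → 0⁺, the variance of the single-sample policy gradient estimator G = L(m)·(m-s)/(s(1-s)) tends to +∞ (specifically E[G²] ≥ L(1)²(1-s)/s → ∞), whereas the second moment of the VR-PGE estimator with α = 1/2, namely (L(m)-L(m'))·(s(1-s))^{1/2}·(m-s)/(s(1-s)) for independent m, m' ~ Bernoulli(s), is bounded by (L(1)-L(0))² uniformly in s. -/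
open Filter

/-- With `L(0), L(1) > 0`, as `s → 0⁺` the second moment of the single-sample
policy gradient estimator `G = L(m)·(m-s)/(s(1-s))` tends to `+∞`, whereas the
second moment of the VR-PGE estimator with `α = 1/2`, namely
`(L(m)-L(m'))·(s(1-s))^{1/2}·(m-s)/(s(1-s))` for independent `m, m' ~ Bernoulli(s)`,
is bounded by `(L(1)-L(0))²` uniformly over `s ∈ (0,1)`. -/
theorem pge_blows_up_vrpge_bounded (L : Bool → ℝ)
    (hL0 : 0 < L false) (hL1 : 0 < L true) :
    Tendsto
      (fun s : ℝ => s * (L true * ((1 - s) / (s * (1 - s)))) ^ 2 +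
        (1 - s) * (L false * ((0 - s) / (s * (1 - s)))) ^ 2)
      (nhdsWithin 0 (Set.Ioo (0:ℝ) 1)) atTop ∧
    ∀ s ∈ Set.Ioo (0:ℝ) 1,
      (∑ m : Bool, ∑ m' : Bool,
        bernPr s m * bernPr s m' *
          ((L m - L m') * Real.sqrt (s * (1 - s)) *
            ((bval m - s) / (s * (1 - s)))) ^ 2) ≤ (L true - L false) ^ 2 := by
  constructor
  · have h1 : Tendsto (fun s : ℝ => (L true) ^ 2 * s⁻¹)
        (nhdsWithin 0 (Set.Ioo (0:ℝ) 1)) atTop := by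
      apply Tendsto.const_mul_atTop (pow_pos hL1 2)
      exact tendsto_inv_nhdsGT_zero.mono_left
        (nhdsWithin_mono 0 Set.Ioo_subset_Ioi_self)
    apply tendsto_atTop_mono' _ _ h1
    filter_upwards [self_mem_nhdsWithin] with s hs
    obtain ⟨hs0, hs1⟩ := hs
    have h1s : (0:ℝ) < 1 - s := by linarith
    have key : s * (L true * ((1 - s) / (s * (1 - s)))) ^ 2 = (L true) ^ 2 * s⁻¹ := by
      field_simp
    rw [key]
    have : 0 ≤ (1 - s) * (L false * ((0 - s) / (s * (1 - s)))) ^ 2 :=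
      mul_nonneg h1s.le (sq_nonneg _)
    linarith
  · rintro s ⟨hs0, hs1⟩
    have h1s : (0:ℝ) < 1 - s := by linarith
    have hss : (0:ℝ) < s * (1 - s) := mul_pos hs0 h1s
    have hsq : Real.sqrt (s * (1 - s)) ^ 2 = s * (1 - s) := Real.sq_sqrt hss.le
    simp only [Fintype.sum_bool, bernPr, bval, if_true, if_false, Bool.false_eq_true]
    have key : ∀ a : ℝ, (a * Real.sqrt (s * (1 - s))) ^ 2 = a ^ 2 * (s * (1 - s)) := by
      intro a
      rw [mul_pow, hsq]
    have expand :
        s * s * ((L true - L true) * Real.sqrt (s * (1 - s)) * ((1 - s) / (s * (1 - s)))) ^ 2 +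
        s * (1 - s) * ((L true - L false) * Real.sqrt (s * (1 - s)) * ((1 - s) / (s * (1 - s)))) ^ 2 +
        ((1 - s) * s * ((L false - L true) * Real.sqrt (s * (1 - s)) * ((0 - s) / (s * (1 - s)))) ^ 2 +
        (1 - s) * (1 - s) * ((L false - L false) * Real.sqrt (s * (1 - s)) * ((0 - s) / (s * (1 - s)))) ^ 2)
        = (L true - L false) ^ 2 * ((1 - s) ^ 2 + s ^ 2) := by
      have e1 : ((L true - L false) * Real.sqrt (s * (1 - s)) * ((1 - s) / (s * (1 - s)))) ^ 2
          = (L true - L false) ^ 2 * (s * (1 - s)) * ((1 - s) / (s * (1 - s))) ^ 2 := by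
        rw [mul_pow, mul_pow, hsq]; try ring
      have e2 : ((L false - L true) * Real.sqrt (s * (1 - s)) * ((0 - s) / (s * (1 - s)))) ^ 2
          = (L false - L true) ^ 2 * (s * (1 - s)) * ((0 - s) / (s * (1 - s))) ^ 2 := by
        rw [mul_pow, mul_pow, hsq]; try ring
      rw [e1, e2]
      field_simp
      try ring
    rw [expand]
    nlinarith [sq_nonneg (L true - L false), sq_nonneg s, mul_pos hs0 h1s,
      mul_nonneg (sq_nonneg (L true - L false)) (mul_pos hs0 h1s).le]
end
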